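/- Let ε > 0, m > 0, ω(k) := √(m² + |k|²), and let F : ℝ³ → ℂ be measurable with |F(k)| ≤ C(1 + |k|)^N for some constants C and N. Then the function g : ℝ⁴ → ℂ defined by the absolutely convergent integral g(y) := ∫_{ℝ³} F(k) e^{−εω(k)/2} e^{−i(ω(k)y⁰ + k·y⃗)} d³k is real-analytic on all of ℝ⁴. -/

import Mathlib

/-!
Write `L_k y = -i(ω(k) y⁰ + k·y⃗)`, a real-linear functional with `‖L_k‖ ≤ 2ω(k)` and
`|e^{L_k y}| = 1`. Around any `y₀`, expanding `e^{L_k (y₀ + z)} = e^{L_k y₀} Σₙ (L_k z)ⁿ / n!`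
under the integral produces a power series in `z` whose `n`-th coefficient, times `rⁿ`, is bounded
by `∫ |F| e^{-εω/2} e^{r‖L_k‖}`. For `r = ε/8` this is finite, because the damping `e^{-εω/2}`
beats both `e^{εω/4}` and the polynomial growth of `F`; for `‖z‖ < r` the exchange of sum and
integral is justified by the geometric majorant `(‖z‖/r)ⁿ`.
-/

noncomputable section

open MeasureTheory

/-- `ω(k) = √(m² + |k|²)`. -/
def omegaM (m : ℝ) (k : EuclideanSpace ℝ (Fin 3)) : ℝ := Real.sqrt (m ^ 2 + ‖k‖ ^ 2)

/-- The regularized lower-mass-shell Fourier-type integral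
`g(y) = ∫ F(k) e^{-εω(k)/2} e^{-i(ω(k)y⁰ + k·y⃗)} d³k`. -/
def shellIntegral (m ε : ℝ) (F : EuclideanSpace ℝ (Fin 3) → ℂ)
    (y : EuclideanSpace ℝ (Fin 4)) : ℂ :=
  ∫ k : EuclideanSpace ℝ (Fin 3),
    F k * Complex.exp (-((ε : ℂ) * (omegaM m k : ℂ)) / 2) *
      Complex.exp (-Complex.I *
        ((omegaM m k : ℂ) * (y 0 : ℂ) + ∑ j : Fin 3, (k j : ℂ) * (y j.succ : ℂ)))

open NormedSpace
open scoped Nat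

section ExpSeries

variable {E : Type*} [NormedAddCommGroup E] [NormedSpace ℝ E]

def expMulSeries (w : ℂ) (ℓ : E →L[ℝ] ℂ) : FormalMultilinearSeries ℝ E ℂ :=
  w • (expSeries ℝ ℂ).compContinuousLinearMap ℓ

theorem expMulSeries_apply_const (w : ℂ) (ℓ : E →L[ℝ] ℂ) (n : ℕ) (z : E) :
    expMulSeries w ℓ n (fun _ => z) = w * (n !⁻¹ : ℝ) • ℓ z ^ n := by
  simp only [expMulSeries, FormalMultilinearSeries.smul_apply, smul_apply,
    FormalMultilinearSeries.compContinuousLinearMap_apply, smul_eq_mul]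
  exact congrArg (w * ·) (expSeries_apply_eq (ℓ z) n)

theorem hasSum_expMulSeries (w : ℂ) (ℓ : E →L[ℝ] ℂ) (z : E) :
    HasSum (fun n => expMulSeries w ℓ n (fun _ => z)) (w * Complex.exp (ℓ z)) := by
  simp only [expMulSeries_apply_const, Complex.exp_eq_exp_ℂ]
  exact (exp_series_hasSum_exp' (𝕂 := ℝ) (ℓ z)).mul_left w

theorem norm_expMulSeries_le (w : ℂ) (ℓ : E →L[ℝ] ℂ) (n : ℕ) :
    ‖expMulSeries w ℓ n‖ ≤ ‖w‖ * ‖ℓ‖ ^ n / n ! := by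
  calc ‖expMulSeries w ℓ n‖ ≤ ‖w‖ * (‖expSeries ℝ ℂ n‖ * ∏ _i : Fin n, ‖ℓ‖) :=
        (norm_smul_le w ((expSeries ℝ ℂ).compContinuousLinearMap ℓ n)).trans (by
          gcongr; exact ContinuousMultilinearMap.norm_compContinuousLinearMap_le _ _)
    _ = ‖w‖ * ‖ℓ‖ ^ n / n ! := by
        simp only [expSeries, norm_smul, ContinuousMultilinearMap.norm_mkPiAlgebraFin]
        simp only [norm_inv, RCLike.norm_natCast, mul_one, Finset.prod_const, Finset.card_univ,
          Fintype.card_fin]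
        ring

theorem norm_expMulSeries_mul_pow_le (w : ℂ) (ℓ : E →L[ℝ] ℂ) (n : ℕ) {r : ℝ} (hr : 0 ≤ r) :
    ‖expMulSeries w ℓ n‖ * r ^ n ≤ ‖w‖ * Real.exp (r * ‖ℓ‖) :=
  calc ‖expMulSeries w ℓ n‖ * r ^ n ≤ ‖w‖ * ‖ℓ‖ ^ n / n ! * r ^ n := by
        gcongr; exact norm_expMulSeries_le w ℓ n
    _ = ‖w‖ * ((r * ‖ℓ‖) ^ n / n !) := by ring
    _ ≤ ‖w‖ * Real.exp (r * ‖ℓ‖) := by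
        gcongr; exact Real.pow_div_factorial_le_exp _ (by positivity) n

theorem continuous_expMulSeries (n : ℕ) :
    Continuous fun p : ℂ × (E →L[ℝ] ℂ) => expMulSeries p.1 p.2 n := by
  have hcomp : Continuous fun ℓ : E →L[ℝ] ℂ => (expSeries ℝ ℂ).compContinuousLinearMap ℓ n :=
    (ContinuousMultilinearMap.compContinuousLinearMapLRight _).cont.comp
      (continuous_pi fun _ => continuous_id)
  exact continuous_fst.smul (hcomp.comp continuous_snd)

theorem norm_expMulSeries_apply_const_le (w : ℂ) (ℓ : E →L[ℝ] ℂ) (n : ℕ) (z : E) {r : ℝ}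
    (hr : 0 < r) :
    ‖expMulSeries w ℓ n (fun _ => z)‖ ≤ ‖w‖ * Real.exp (r * ‖ℓ‖) * (‖z‖ / r) ^ n :=
  calc ‖expMulSeries w ℓ n (fun _ => z)‖ ≤ ‖expMulSeries w ℓ n‖ * ‖z‖ ^ n := by
        simpa using (expMulSeries w ℓ n).le_opNorm fun _ => z
    _ = ‖expMulSeries w ℓ n‖ * r ^ n * (‖z‖ / r) ^ n := by
        rw [div_pow, mul_assoc, mul_div_cancel₀ _ (pow_ne_zero n hr.ne')]
    _ ≤ ‖w‖ * Real.exp (r * ‖ℓ‖) * (‖z‖ / r) ^ n :=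
        mul_le_mul_of_nonneg_right (norm_expMulSeries_mul_pow_le w ℓ n hr.le) (by positivity)

end ExpSeries

section Integral

variable {α E : Type*} [MeasurableSpace α] {μ : Measure α} [NormedAddCommGroup E]
  [NormedSpace ℝ E] {w : α → ℂ} {L : α → E →L[ℝ] ℂ} {r : ℝ}

variable (μ w L) in
def integralExpMulSeries : FormalMultilinearSeries ℝ E ℂ :=
  fun n => ∫ k, expMulSeries (w k) (L k) n ∂μ

theorem integrable_expMulSeries (hr : 0 < r) (hw : AEStronglyMeasurable w μ)
    (hL : AEStronglyMeasurable L μ)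
    (hint : Integrable (fun k => ‖w k‖ * Real.exp (r * ‖L k‖)) μ) (n : ℕ) :
    Integrable (fun k => expMulSeries (w k) (L k) n) μ := by
  refine (hint.div_const (r ^ n)).mono'
    ((continuous_expMulSeries n).comp_aestronglyMeasurable (hw.prodMk hL)) (ae_of_all _ fun k => ?_)
  rw [le_div_iff₀ (by positivity)]
  exact norm_expMulSeries_mul_pow_le _ _ n hr.le

theorem le_radius_integralExpMulSeries (hr : 0 < r) (hw : AEStronglyMeasurable w μ)
    (hL : AEStronglyMeasurable L μ)
    (hint : Integrable (fun k => ‖w k‖ * Real.exp (r * ‖L k‖)) μ) :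
    ENNReal.ofReal r ≤ (integralExpMulSeries μ w L).radius := by
  refine (integralExpMulSeries μ w L).le_radius_of_bound (∫ k, ‖w k‖ * Real.exp (r * ‖L k‖) ∂μ)
    fun n => ?_
  have hcoeff := integrable_expMulSeries hr hw hL hint n
  calc ‖integralExpMulSeries μ w L n‖ * (r.toNNReal : ℝ) ^ n
      ≤ (∫ k, ‖expMulSeries (w k) (L k) n‖ ∂μ) * r ^ n := by
        rw [Real.coe_toNNReal _ hr.le]
        gcongr; exact norm_integral_le_integral_norm _
    _ = ∫ k, ‖expMulSeries (w k) (L k) n‖ * r ^ n ∂μ := (integral_mul_const _ _).symm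
    _ ≤ ∫ k, ‖w k‖ * Real.exp (r * ‖L k‖) ∂μ :=
        integral_mono (hcoeff.norm.mul_const _) hint
          fun k => norm_expMulSeries_mul_pow_le _ _ n hr.le

theorem hasSum_integralExpMulSeries (hr : 0 < r) (hw : AEStronglyMeasurable w μ)
    (hL : AEStronglyMeasurable L μ)
    (hint : Integrable (fun k => ‖w k‖ * Real.exp (r * ‖L k‖)) μ) {z : E} (hz : ‖z‖ < r) :
    HasSum (fun n => integralExpMulSeries μ w L n (fun _ => z))
      (∫ k, w k * Complex.exp (L k z) ∂μ) := by
  have hcoeff := integrable_expMulSeries hr hw hL hint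
  have happly (n : ℕ) : Integrable (fun k => expMulSeries (w k) (L k) n (fun _ => z)) μ :=
    (ContinuousMultilinearMap.apply ℝ _ ℂ fun _ => z).integrable_comp (hcoeff n)
  have hsummable : Summable fun n => ∫ k, ‖expMulSeries (w k) (L k) n (fun _ => z)‖ ∂μ := by
    refine Summable.of_nonneg_of_le (fun n => integral_nonneg fun k => norm_nonneg _)
      (fun n => ?_) ((summable_geometric_of_lt_one (by positivity) ((div_lt_one hr).2 hz)).mul_left
        (∫ k, ‖w k‖ * Real.exp (r * ‖L k‖) ∂μ))
    rw [← integral_mul_const]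
    exact integral_mono (happly n).norm (hint.mul_const _)
      fun k => norm_expMulSeries_apply_const_le _ _ n z hr
  have hterms : (fun n => integralExpMulSeries μ w L n (fun _ => z)) =
      fun n => ∫ k, expMulSeries (w k) (L k) n (fun _ => z) ∂μ :=
    funext fun n => ContinuousMultilinearMap.integral_apply (hcoeff n) _
  have hsum : ∫ k, w k * Complex.exp (L k z) ∂μ =
      ∫ k, ∑' n, expMulSeries (w k) (L k) n (fun _ => z) ∂μ :=
    integral_congr_ae (ae_of_all _ fun k => (hasSum_expMulSeries _ _ z).tsum_eq.symm)
  rw [hterms, hsum]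
  exact hasSum_integral_of_summable_integral_norm happly hsummable

theorem hasFPowerSeriesOnBall_integral_mul_exp (hr : 0 < r) (hw : AEStronglyMeasurable w μ)
    (hL : AEStronglyMeasurable L μ)
    (hint : Integrable (fun k => ‖w k‖ * Real.exp (r * ‖L k‖)) μ) :
    HasFPowerSeriesOnBall (fun z => ∫ k, w k * Complex.exp (L k z) ∂μ)
      (integralExpMulSeries μ w L) 0 (ENNReal.ofReal r) where
  r_le := le_radius_integralExpMulSeries hr hw hL hint
  r_pos := ENNReal.ofReal_pos.2 hr
  hasSum {z} hz := by
    rw [zero_add]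
    refine hasSum_integralExpMulSeries hr hw hL hint ?_
    rwa [mem_eball_zero_iff, ← ofReal_norm, ENNReal.ofReal_lt_ofReal_iff hr] at hz

theorem analyticAt_integral_mul_exp (y₀ : E) (hr : 0 < r) (hw : AEStronglyMeasurable w μ)
    (hL : AEStronglyMeasurable L μ)
    (hint : Integrable (fun k => ‖w k * Complex.exp (L k y₀)‖ * Real.exp (r * ‖L k‖)) μ) :
    AnalyticAt ℝ (fun y => ∫ k, w k * Complex.exp (L k y) ∂μ) y₀ := by
  have hw₀ : AEStronglyMeasurable (fun k => w k * Complex.exp (L k y₀)) μ :=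
    hw.mul (Complex.continuous_exp.comp_aestronglyMeasurable
      ((ContinuousLinearMap.apply ℝ ℂ y₀).continuous.comp_aestronglyMeasurable hL))
  have hshift : (fun y => ∫ k, w k * Complex.exp (L k y) ∂μ) =
      (fun z => ∫ k, w k * Complex.exp (L k y₀) * Complex.exp (L k z) ∂μ) ∘ (· - y₀) := by
    ext y
    simp only [Function.comp, mul_assoc, ← Complex.exp_add, ← map_add, add_sub_cancel]
  rw [hshift]
  refine AnalyticAt.comp ?_ (analyticAt_id.sub analyticAt_const)
  rw [sub_self]
  exact (hasFPowerSeriesOnBall_integral_mul_exp hr hw₀ hL hint).analyticAt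

end Integral

section PolyExp

variable {E : Type*} [NormedAddCommGroup E] [NormedSpace ℝ E] [FiniteDimensional ℝ E]
  [MeasurableSpace E] [BorelSpace E]

theorem one_add_pow_mul_exp_neg_mul_le {c t : ℝ} (hc : 0 < c) (ht : 0 ≤ t) (P : ℕ) :
    (1 + t) ^ P * Real.exp (-(c * t)) ≤ Real.exp c * P ! / c ^ P := by
  have hexp : (c * (1 + t)) ^ P / P ! ≤ Real.exp c * Real.exp (c * t) := by
    rw [← Real.exp_add, ← mul_one_add c t]
    exact Real.pow_div_factorial_le_exp _ (by positivity) P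
  rw [le_div_iff₀ (by positivity), Real.exp_neg]
  rw [mul_pow, div_le_iff₀ (by positivity)] at hexp
  calc (1 + t) ^ P * (Real.exp (c * t))⁻¹ * c ^ P
      = c ^ P * (1 + t) ^ P * (Real.exp (c * t))⁻¹ := by ring
    _ ≤ Real.exp c * Real.exp (c * t) * P ! * (Real.exp (c * t))⁻¹ := by gcongr
    _ = Real.exp c * P ! := by field_simp

theorem integrable_one_add_norm_pow_mul_exp_neg_mul_norm (μ : Measure E) [μ.IsAddHaarMeasure]
    {c : ℝ} (hc : 0 < c) (M : ℕ) :
    Integrable (fun x => (1 + ‖x‖) ^ M * Real.exp (-(c * ‖x‖))) μ := by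
  set d := Module.finrank ℝ E
  set P := M + (d + 1)
  have hdecay : Integrable (fun x : E => (1 + ‖x‖) ^ (-((d : ℝ) + 1))) μ :=
    integrable_one_add_norm (by linarith)
  refine (hdecay.const_mul (Real.exp c * P ! / c ^ P)).mono' (by fun_prop)
    (ae_of_all _ fun x => ?_)
  have h1 : 0 < 1 + ‖x‖ := by positivity
  have hsplit : (1 + ‖x‖) ^ M = (1 + ‖x‖) ^ P * (1 + ‖x‖) ^ (-((d : ℝ) + 1)) := by
    rw [← Real.rpow_natCast, ← Real.rpow_natCast, ← Real.rpow_add h1]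
    push_cast [P]; ring_nf
  rw [Real.norm_of_nonneg (by positivity), hsplit, mul_right_comm]
  gcongr
  exact one_add_pow_mul_exp_neg_mul_le hc (norm_nonneg x) P

end PolyExp

theorem norm_le_omegaM (m : ℝ) (k : EuclideanSpace ℝ (Fin 3)) : ‖k‖ ≤ omegaM m k :=
  Real.le_sqrt_of_sq_le (by nlinarith)

def shellMomentum (m : ℝ) (k : EuclideanSpace ℝ (Fin 3)) : EuclideanSpace ℝ (Fin 4) :=
  WithLp.toLp 2 (Fin.cons (omegaM m k) k)

theorem continuous_shellMomentum (m : ℝ) : Continuous (shellMomentum m) := by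
  unfold shellMomentum omegaM
  fun_prop

theorem norm_shellMomentum_le (m : ℝ) (k : EuclideanSpace ℝ (Fin 3)) :
    ‖shellMomentum m k‖ ≤ 2 * omegaM m k := by
  have hsq : ‖shellMomentum m k‖ ^ 2 = omegaM m k ^ 2 + ‖k‖ ^ 2 := by
    simp [shellMomentum, EuclideanSpace.norm_sq_eq, Fin.sum_univ_succ]
  have hk := norm_le_omegaM m k
  nlinarith [norm_nonneg k, norm_nonneg (shellMomentum m k)]

def shellPhase (m : ℝ) (k : EuclideanSpace ℝ (Fin 3)) : EuclideanSpace ℝ (Fin 4) →L[ℝ] ℂ :=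
  -Complex.I • (Complex.ofRealCLM ∘L innerSL ℝ (shellMomentum m k))

theorem shellPhase_apply (m : ℝ) (k : EuclideanSpace ℝ (Fin 3)) (y : EuclideanSpace ℝ (Fin 4)) :
    shellPhase m k y =
      -Complex.I * ((omegaM m k : ℂ) * (y 0 : ℂ) + ∑ j : Fin 3, (k j : ℂ) * (y j.succ : ℂ)) := by
  simp [shellPhase, shellMomentum, PiLp.inner_apply, Fin.sum_univ_succ, mul_comm]

theorem norm_shellPhase_le (m : ℝ) (k : EuclideanSpace ℝ (Fin 3)) :
    ‖shellPhase m k‖ ≤ 2 * omegaM m k :=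
  calc ‖shellPhase m k‖ = ‖Complex.ofRealCLM ∘L innerSL ℝ (shellMomentum m k)‖ := by
        simp [shellPhase, norm_smul]
    _ ≤ ‖Complex.ofRealCLM‖ * ‖innerSL ℝ (shellMomentum m k)‖ :=
        ContinuousLinearMap.opNorm_comp_le _ _
    _ ≤ 2 * omegaM m k := by
        simpa using norm_shellMomentum_le m k

theorem continuous_shellPhase (m : ℝ) : Continuous (shellPhase m) :=
  (((ContinuousLinearMap.compL ℝ _ ℝ ℂ Complex.ofRealCLM).continuous.comp
    ((innerSL ℝ).continuous.comp (continuous_shellMomentum m))).const_smul (-Complex.I))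

theorem norm_cexp_shellPhase (m : ℝ) (k : EuclideanSpace ℝ (Fin 3)) (y : EuclideanSpace ℝ (Fin 4)) :
    ‖Complex.exp (shellPhase m k y)‖ = 1 := by
  simp [shellPhase, Complex.norm_exp]

def shellWeight (m ε : ℝ) (F : EuclideanSpace ℝ (Fin 3) → ℂ) (k : EuclideanSpace ℝ (Fin 3)) : ℂ :=
  F k * Complex.exp (-((ε : ℂ) * (omegaM m k : ℂ)) / 2)

theorem shellIntegral_eq_integral_mul_exp (m ε : ℝ) (F : EuclideanSpace ℝ (Fin 3) → ℂ) :
    shellIntegral m ε F =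
      fun y => ∫ k, shellWeight m ε F k * Complex.exp (shellPhase m k y) := by
  ext y
  simp only [shellIntegral, shellWeight, shellPhase_apply]

theorem norm_shellWeight (m ε : ℝ) (F : EuclideanSpace ℝ (Fin 3) → ℂ)
    (k : EuclideanSpace ℝ (Fin 3)) :
    ‖shellWeight m ε F k‖ = ‖F k‖ * Real.exp (-(ε * omegaM m k) / 2) := by
  rw [shellWeight, norm_mul, Complex.norm_exp]
  congr 2
  simp [← Complex.ofReal_mul]

theorem measurable_shellWeight (m ε : ℝ) {F : EuclideanSpace ℝ (Fin 3) → ℂ} (hF : Measurable F) :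
    Measurable (shellWeight m ε F) := by
  unfold shellWeight omegaM
  fun_prop

theorem integrable_shellWeight_mul_exp {m ε : ℝ} (hε : 0 < ε) {F : EuclideanSpace ℝ (Fin 3) → ℂ}
    (hF : Measurable F) {C : ℝ} {N : ℕ} (hbound : ∀ k, ‖F k‖ ≤ C * (1 + ‖k‖) ^ N)
    (y₀ : EuclideanSpace ℝ (Fin 4)) :
    Integrable (fun k => ‖shellWeight m ε F k * Complex.exp (shellPhase m k y₀)‖ *
      Real.exp (ε / 8 * ‖shellPhase m k‖)) := by
  refine ((integrable_one_add_norm_pow_mul_exp_neg_mul_norm volume (c := ε / 4) (by positivity)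
    N).const_mul C).mono' ?_ (ae_of_all _ fun k => ?_)
  · have hw := measurable_shellWeight m ε hF
    have hL := continuous_shellPhase m
    fun_prop
  · have hdecay : -(ε * omegaM m k) / 2 + ε / 8 * ‖shellPhase m k‖ ≤ -(ε / 4 * ‖k‖) := by
      nlinarith [norm_shellPhase_le m k, norm_le_omegaM m k]
    rw [Real.norm_of_nonneg (by positivity), norm_mul, norm_cexp_shellPhase,
      mul_one, norm_shellWeight, mul_assoc, ← Real.exp_add, ← mul_assoc]
    exact mul_le_mul (hbound k) (Real.exp_le_exp.2 hdecay) (by positivity)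
      ((norm_nonneg _).trans (hbound k))

theorem shellIntegral_analytic_general (m ε : ℝ) (hε : 0 < ε)
    (F : EuclideanSpace ℝ (Fin 3) → ℂ) (hF : Measurable F)
    (C : ℝ) (N : ℕ) (hbound : ∀ k, ‖F k‖ ≤ C * (1 + ‖k‖) ^ N) :
    AnalyticOnNhd ℝ (shellIntegral m ε F) Set.univ := by
  intro y₀ _
  rw [shellIntegral_eq_integral_mul_exp]
  exact analyticAt_integral_mul_exp y₀ (by positivity)
    (measurable_shellWeight m ε hF).aestronglyMeasurable
    (continuous_shellPhase m).aestronglyMeasurable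
    (integrable_shellWeight_mul_exp hε hF hbound y₀)

/-- Paley–Wiener step in the proof of Theorem 4.2: let `ε > 0`, `m > 0`,
`ω(k) = √(m² + |k|²)`, and `F : ℝ³ → ℂ` measurable with `|F(k)| ≤ C (1 + |k|)^N`. Then
`g(y) = ∫ F(k) e^{-εω(k)/2} e^{-i(ω(k)y⁰ + k·y⃗)} d³k` (an absolutely convergent integral) is
real-analytic on all of `ℝ⁴`. -/
theorem shellIntegral_analytic (m ε : ℝ) (hm : 0 < m) (hε : 0 < ε)
    (F : EuclideanSpace ℝ (Fin 3) → ℂ) (hF : Measurable F)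
    (C : ℝ) (N : ℕ) (hbound : ∀ k, ‖F k‖ ≤ C * (1 + ‖k‖) ^ N) :
    AnalyticOnNhd ℝ (shellIntegral m ε F) Set.univ :=
  shellIntegral_analytic_general m ε hε F hF C N hbound
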